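/- arXiv:2104.02131 — 4 statements merged into one kernel-verified Lean document; each statement's English description precedes it below -/
import Mathlib

section
/- Let k ≥ 0 and let S be an integer with k+1 ≤ S ≤ 2^(k+1) - 1. Then (S - (k+1)) / (2^(k+1) - (k+2)) ≤ (2S - (k+1)) / (2^(k+2) - (k+3)), with equality if and only if S = 2^(k+1) - 1. -/
open Finset

lemma pow_lb (k : ℕ) (hk : 1 ≤ k) : k + 3 ≤ 2 ^ (k + 1) := by
  induction k with
  | zero => omega
  | succ n ih =>
    rcases Nat.eq_or_lt_of_le hk with h | h
    · simp [← h]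
    · have := ih (by omega)
      have : 2 ^ (n + 1) ≥ n + 3 := this
      calc n + 1 + 3 ≤ 2 * (n + 3) := by omega
        _ ≤ 2 * 2 ^ (n + 1) := by omega
        _ = 2 ^ (n + 1 + 1) := by ring

theorem stmt4 (k : ℕ) (hk : 1 ≤ k) (S : ℤ)
    (h1 : (k : ℤ) + 1 ≤ S) (h2 : S ≤ 2 ^ (k + 1) - 1) :
    (((S : ℚ) - (k + 1)) / (2 ^ (k + 1) - (k + 2)) ≤
      (2 * (S : ℚ) - (k + 1)) / (2 ^ (k + 2) - (k + 3))) ∧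
    (((S : ℚ) - (k + 1)) / (2 ^ (k + 1) - (k + 2)) =
      (2 * (S : ℚ) - (k + 1)) / (2 ^ (k + 2) - (k + 3)) ↔ S = 2 ^ (k + 1) - 1) := by
  have hpow : ((k : ℚ) + 3) ≤ 2 ^ (k + 1) := by
    have := pow_lb k hk
    exact_mod_cast this
  have hkq : (0 : ℚ) ≤ k := by positivity
  have hD1 : (0 : ℚ) < 2 ^ (k + 1) - (k + 2) := by linarith
  have hD2 : (0 : ℚ) < 2 ^ (k + 2) - (k + 3) := by
    have : (2 : ℚ) ^ (k + 2) = 2 * 2 ^ (k + 1) := by ring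
    rw [this]; linarith
  have hS2 : (S : ℚ) ≤ 2 ^ (k + 1) - 1 := by
    have : (S : ℚ) ≤ ((2 ^ (k + 1) - 1 : ℤ) : ℚ) := by exact_mod_cast h2
    simpa using this
  have hP2 : (2 : ℚ) ^ (k + 2) = 2 * 2 ^ (k + 1) := by ring
  constructor
  · rw [div_le_div_iff₀ hD1 hD2]
    nlinarith [mul_le_mul_of_nonneg_left hS2 (show (0:ℚ) ≤ k + 1 by linarith)]
  · rw [div_eq_div_iff hD1.ne' hD2.ne']
    constructor
    · intro h
      have hq : ((k : ℚ) + 1) * ((S : ℚ) - (2 ^ (k + 1) - 1)) = 0 := by nlinarith [h]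
      have hk1 : ((k : ℚ) + 1) ≠ 0 := by positivity
      have : (S : ℚ) = 2 ^ (k + 1) - 1 := by
        have := mul_eq_zero.mp hq
        rcases this with h' | h'
        · exact absurd h' hk1
        · linarith
      have : (S : ℚ) = ((2 ^ (k + 1) - 1 : ℤ) : ℚ) := by push_cast; linarith
      exact_mod_cast this
    · intro h
      have : (S : ℚ) = 2 ^ (k + 1) - 1 := by
        have : (S : ℚ) = ((2 ^ (k + 1) - 1 : ℤ) : ℚ) := by exact_mod_cast h
        simpa using this
      rw [this]; ring
end

section
/- Let k ≥ 1 and let F, G be positive integers with F + G ≤ 2^(k+1) - 1 and G ≥ k+1. Then (F + G - (k+1)) / (2^(k+1) - (k+2)) > (2F + G - (k+1)) / (2^(k+2) - (k+3)). Equivalently, (k+1)·F > (k+1-G)·(2^(k+1) - 1). -/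
open Finset

lemma aux_pow (k : ℕ) (hk : 1 ≤ k) : k + 2 < 2 ^ (k + 1) := by
  induction k with
  | zero => omega
  | succ n ih =>
    rcases Nat.eq_or_lt_of_le hk with h | h
    · simp [← h]
    · have := ih (by omega)
      have : 2 ^ (n + 2) = 2 * 2 ^ (n + 1) := by ring
      omega

theorem stmt5 (k : ℕ) (hk : 1 ≤ k) (F G : ℤ) (hF : 0 < F) (hG : 0 < G)
    (hFG : F + G ≤ 2 ^ (k + 1) - 1) (hGk : (k : ℤ) + 1 ≤ G) :
    (((F : ℚ) + (G : ℚ) - (k + 1)) / (2 ^ (k + 1) - (k + 2)) >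
      (2 * (F : ℚ) + (G : ℚ) - (k + 1)) / (2 ^ (k + 2) - (k + 3))) ∧
    ((k : ℤ) + 1) * F > ((k : ℤ) + 1 - G) * (2 ^ (k + 1) - 1) := by
  have hp := aux_pow k hk
  have hpQ : ((k : ℚ) + 2) < 2 ^ (k + 1) := by exact_mod_cast hp
  have hD1 : (0 : ℚ) < 2 ^ (k + 1) - (k + 2) := by linarith
  have hD2 : (0 : ℚ) < 2 ^ (k + 2) - (k + 3) := by
    have : (2 : ℚ) ^ (k + 2) = 2 * 2 ^ (k + 1) := by ring
    have hk1 : (1 : ℚ) ≤ k := by exact_mod_cast hk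
    nlinarith
  constructor
  · rw [gt_iff_lt, div_lt_div_iff₀ hD2 hD1]
    have hFQ : (0 : ℚ) < F := by exact_mod_cast hF
    have hGkQ : (k : ℚ) + 1 ≤ G := by exact_mod_cast hGk
    have h2 : (2 : ℚ) ^ (k + 2) = 2 * 2 ^ (k + 1) := by ring
    nlinarith [mul_nonneg (by linarith : (0:ℚ) ≤ (G : ℚ) - (k + 1))
        (by linarith : (0:ℚ) ≤ (2:ℚ) ^ (k + 1) - 1),
      mul_pos hFQ (by linarith : (0:ℚ) < (k : ℚ) + 1)]
  · have h1 : ((k : ℤ) + 1 - G) ≤ 0 := by linarith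
    have h2 : (0 : ℤ) < 2 ^ (k + 1) - 1 := by
      have : (1 : ℤ) < 2 ^ (k + 1) := by exact_mod_cast Nat.one_lt_two_pow_iff.mpr (by omega)
      linarith
    have h3 : ((k : ℤ) + 1 - G) * (2 ^ (k + 1) - 1) ≤ 0 :=
      mul_nonpos_of_nonpos_of_nonneg h1 (by linarith)
    have h4 : (0 : ℤ) < ((k : ℤ) + 1) * F := mul_pos (by positivity) hF
    linarith
end

section
/- Let K and L be finite simplicial complexes sharing a common subcomplex S, and let K ⊔_S L denote their pushout (union glued along S). If S is minimal (has no dominated vertices), then the core of K ⊔_S L equals S if and only if S is the core of K and S is the core of L. -/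
open Finset

/-- A finite abstract simplicial complex on vertex type `V`. -/
structure SC (V : Type*) [DecidableEq V] where
  faces : Finset (Finset V)
  nonempty_of_mem : ∀ σ ∈ faces, σ.Nonempty
  down_closed : ∀ σ ∈ faces, ∀ τ ⊆ σ, τ.Nonempty → τ ∈ faces

variable {V : Type*} [DecidableEq V] {W : Type*} [DecidableEq W]

def SC.IsVertex (K : SC V) (v : V) : Prop := ({v} : Finset V) ∈ K.faces

def SC.IsMaximal (K : SC V) (σ : Finset V) : Prop :=
  σ ∈ K.faces ∧ ∀ τ ∈ K.faces, σ ⊆ τ → σ = τ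

/-- `K.Dominated v w` : the vertex `v` is dominated by the vertex `w ≠ v`,
i.e. every maximal simplex containing `v` also contains `w`. -/
def SC.Dominated (K : SC V) (v w : V) : Prop :=
  v ≠ w ∧ K.IsVertex v ∧ K.IsVertex w ∧ ∀ σ, K.IsMaximal σ → v ∈ σ → w ∈ σ

/-- Deletion of a vertex: the subcomplex of simplices not containing `v`. -/
def SC.delete (K : SC V) (v : V) : SC V where
  faces := K.faces.filter (fun σ => v ∉ σ)
  nonempty_of_mem σ hσ := K.nonempty_of_mem σ (mem_filter.mp hσ).1
  down_closed σ hσ τ hτ hne := by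
    rw [mem_filter] at hσ ⊢
    exact ⟨K.down_closed σ hσ.1 τ hτ hne, fun hv => hσ.2 (hτ hv)⟩

/-- An elementary strong collapse: deletion of a dominated vertex. -/
def CollapseStep (K L : SC V) : Prop := ∃ v w, K.Dominated v w ∧ L = K.delete v

/-- `Collapses K L` : `K` strongly collapses to `L`. -/
def Collapses (K L : SC V) : Prop := Relation.ReflTransGen CollapseStep K L

def SC.Minimal (K : SC V) : Prop := ∀ v w, ¬ K.Dominated v w

def StronglyCollapsible (K : SC V) : Prop :=
  ∃ (L : SC V) (v : V), Collapses K L ∧ L.faces = {({v} : Finset V)}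

def IsCore (K M : SC V) : Prop := Collapses K M ∧ M.Minimal

/-- Union of two complexes on the same vertex type. -/
def SC.union (K L : SC V) : SC V where
  faces := K.faces ∪ L.faces
  nonempty_of_mem σ h := (mem_union.mp h).elim (K.nonempty_of_mem σ) (L.nonempty_of_mem σ)
  down_closed σ h τ hτ hne := mem_union.mpr <| (mem_union.mp h).elim
    (fun h => Or.inl (K.down_closed σ h τ hτ hne))
    (fun h => Or.inr (L.down_closed σ h τ hτ hne))

/-- Isomorphism of simplicial complexes on the same vertex type. -/
def Isom (K L : SC V) : Prop :=
  ∃ e : V ≃ V, ∀ σ : Finset V, σ ∈ K.faces ↔ σ.image e ∈ L.faces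

def SC.star (K : SC V) (a : V) : Finset (Finset V) := K.faces.filter (fun σ => a ∈ σ)

def SC.link (K : SC V) (v : V) : Finset (Finset V) :=
  K.faces.filter (fun τ => v ∉ τ ∧ insert v τ ∈ K.faces)


lemma SC.ext' {K L : SC V} (h : K.faces = L.faces) : K = L := by
  cases K; cases L; simpa using h

/-- Intersection of two complexes. -/
def SC.inter (K L : SC V) : SC V where
  faces := K.faces ∩ L.faces
  nonempty_of_mem σ h := K.nonempty_of_mem σ (mem_inter.mp h).1
  down_closed σ h τ hτ hne := mem_inter.mpr
    ⟨K.down_closed σ (mem_inter.mp h).1 τ hτ hne,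
     L.down_closed σ (mem_inter.mp h).2 τ hτ hne⟩

lemma exists_maximal_supset (K : SC V) {σ : Finset V} (hσ : σ ∈ K.faces) :
    ∃ τ, K.IsMaximal τ ∧ σ ⊆ τ := by
  obtain ⟨τ, hτ, hmax⟩ := Finset.exists_max_image (K.faces.filter (fun τ => σ ⊆ τ))
    (fun τ => τ.card) ⟨σ, mem_filter.mpr ⟨hσ, subset_rfl⟩⟩
  rw [mem_filter] at hτ
  refine ⟨τ, ⟨hτ.1, fun ρ hρ hsub => ?_⟩, hτ.2⟩
  exact Finset.eq_of_subset_of_card_le hsub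
    (hmax ρ (mem_filter.mpr ⟨hρ, hτ.2.trans hsub⟩))

lemma Collapses.faces_subset {A B : SC V} (h : Collapses A B) : B.faces ⊆ A.faces := by
  induction h with
  | refl => exact subset_rfl
  | tail _ hstep ih =>
    obtain ⟨v, w, _, rfl⟩ := hstep
    exact fun σ hσ => ih (mem_filter.mp hσ).1

lemma not_vertex_of_deleted {A S : SC V} {v : V} (h : Collapses (A.delete v) S) :
    ¬ S.IsVertex v := fun hv => by
  have := h.faces_subset hv
  rw [SC.delete, mem_filter] at this
  exact this.2 (mem_singleton_self v)

/-- Restriction of a collapse sequence to one part of a union. -/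
lemma collapses_inter (K L S : SC V) (hS : S.faces = K.faces ∩ L.faces)
    {A : SC V} (h : Collapses A S) (hA : A.faces ⊆ (K.union L).faces) :
    Collapses (A.inter K) S := by
  revert hA
  induction h using Relation.ReflTransGen.head_induction_on with
  | refl =>
    intro _
    have hSK : S.inter K = S := SC.ext' (by
      ext σ; simp only [SC.inter, mem_inter, hS]; tauto)
    rw [hSK]
    exact Relation.ReflTransGen.refl
  | head hstep hrest ih =>
    intro hA
    obtain ⟨v, w, hd, rfl⟩ := hstep
    rename_i a
    have hcA : ((a : SC V).delete v).faces ⊆ (K.union L).faces :=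
      (Finset.filter_subset _ _).trans hA
    have hvS : ¬ S.IsVertex v := not_vertex_of_deleted hrest
    by_cases hvK : ({v} : Finset V) ∈ K.faces
    · -- the deleted vertex belongs to K : delete it from the K part
      have hvL : ({v} : Finset V) ∉ L.faces := fun hl =>
        hvS (by rw [SC.IsVertex, hS]; exact mem_inter.mpr ⟨hvK, hl⟩)
      have key : ∀ τ ∈ a.faces, v ∈ τ → τ ∈ K.faces := by
        intro τ hτ hvτ
        rcases mem_union.mp (hA hτ) with h | h
        · exact h
        · exact absurd (L.down_closed τ h {v} (singleton_subset_iff.mpr hvτ)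
            (singleton_nonempty v)) hvL
      have hmaxlift : ∀ σ, (a.inter K).IsMaximal σ → v ∈ σ → a.IsMaximal σ := by
        rintro σ ⟨hσ, hmax⟩ hv
        refine ⟨(mem_inter.mp hσ).1, fun τ hτ hsub => ?_⟩
        exact hmax τ (mem_inter.mpr ⟨hτ, key τ hτ (hsub hv)⟩) hsub
      obtain ⟨σ, hσmax, hσv⟩ := exists_maximal_supset (a.inter K)
        (mem_inter.mpr ⟨hd.2.1, hvK⟩)
      have hvσ : v ∈ σ := hσv (mem_singleton_self v)
      have hwσ : w ∈ σ := hd.2.2.2 σ (hmaxlift σ hσmax hvσ) hvσ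
      have hwvert : ({w} : Finset V) ∈ (a.inter K).faces :=
        (a.inter K).down_closed σ hσmax.1 {w} (singleton_subset_iff.mpr hwσ)
          (singleton_nonempty w)
      have hdom : (a.inter K).Dominated v w :=
        ⟨hd.1, mem_inter.mpr ⟨hd.2.1, hvK⟩, hwvert,
          fun σ hm hv => hd.2.2.2 σ (hmaxlift σ hm hv) hv⟩
      have heq : (a.delete v).inter K = (a.inter K).delete v := SC.ext' (by
        ext σ
        simp only [SC.inter, SC.delete, mem_inter, mem_filter]
        tauto)
      exact Relation.ReflTransGen.head (b := (a.delete v).inter K)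
        ⟨v, w, hdom, heq⟩ (ih hcA)
    · -- the deleted vertex is not in K : the K part is unchanged
      have heq : a.inter K = (a.delete v).inter K := SC.ext' (by
        ext σ
        simp only [SC.inter, SC.delete, mem_inter, mem_filter]
        constructor
        · rintro ⟨h1, h2⟩
          refine ⟨⟨h1, fun hv => ?_⟩, h2⟩
          exact hvK (K.down_closed σ h2 {v} (singleton_subset_iff.mpr hv)
            (singleton_nonempty v))
        · rintro ⟨⟨h1, _⟩, h2⟩; exact ⟨h1, h2⟩)
      rw [heq]
      exact ih hcA

/-- Lifting a collapse sequence into a union. -/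
lemma collapses_union (K L S : SC V) (hS : S.faces = K.faces ∩ L.faces)
    {A : SC V} (h : Collapses A S) (hA : A.faces ⊆ K.faces) :
    Collapses (A.union L) (S.union L) := by
  revert hA
  induction h using Relation.ReflTransGen.head_induction_on with
  | refl => intro _; exact Relation.ReflTransGen.refl
  | head hstep hrest ih =>
    intro hA
    obtain ⟨v, w, hd, rfl⟩ := hstep
    rename_i a
    have hcA : (a.delete v).faces ⊆ K.faces := (Finset.filter_subset _ _).trans hA
    have hvS : ¬ S.IsVertex v := not_vertex_of_deleted hrest
    have hvK : ({v} : Finset V) ∈ K.faces := hA hd.2.1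
    have hvL : ({v} : Finset V) ∉ L.faces := fun hl =>
      hvS (by rw [SC.IsVertex, hS]; exact mem_inter.mpr ⟨hvK, hl⟩)
    have key : ∀ τ ∈ L.faces, v ∉ τ := fun τ hτ hv =>
      hvL (L.down_closed τ hτ {v} (singleton_subset_iff.mpr hv) (singleton_nonempty v))
    have hmaxlift : ∀ σ, (a.union L).IsMaximal σ → v ∈ σ → a.IsMaximal σ := by
      rintro σ ⟨hσ, hmax⟩ hv
      rcases mem_union.mp hσ with h | h
      · exact ⟨h, fun τ hτ hsub => hmax τ (mem_union.mpr (Or.inl hτ)) hsub⟩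
      · exact absurd hv (key σ h)
    have hdom : (a.union L).Dominated v w :=
      ⟨hd.1, mem_union.mpr (Or.inl hd.2.1), mem_union.mpr (Or.inl hd.2.2.1),
        fun σ hm hv => hd.2.2.2 σ (hmaxlift σ hm hv) hv⟩
    have heq : (a.union L).delete v = (a.delete v).union L := SC.ext' (by
      ext σ
      simp only [SC.union, SC.delete, mem_union, mem_filter]
      constructor
      · rintro ⟨h1 | h1, h2⟩
        · exact Or.inl ⟨h1, h2⟩
        · exact Or.inr h1
      · rintro (⟨h1, h2⟩ | h1)
        · exact ⟨Or.inl h1, h2⟩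
        · exact ⟨Or.inr h1, key σ h1⟩)
    exact Relation.ReflTransGen.head (b := (a.delete v).union L)
      ⟨v, w, hdom, heq.symm⟩ (ih hcA)

theorem stmt6 (K L S : SC V) (hS : S.faces = K.faces ∩ L.faces)
    (hmin : S.Minimal) :
    IsCore (K.union L) S ↔ (IsCore K S ∧ IsCore L S) := by
  have hSK : S.faces ⊆ K.faces := by rw [hS]; exact inter_subset_left
  have hSL : S.faces ⊆ L.faces := by rw [hS]; exact inter_subset_right
  have hS' : S.faces = L.faces ∩ K.faces := by rw [hS, inter_comm]
  constructor
  · rintro ⟨hcol, -⟩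
    have h1 : Collapses ((K.union L).inter K) S :=
      collapses_inter K L S hS hcol subset_rfl
    have e1 : (K.union L).inter K = K := SC.ext' (by
      ext σ
      simp only [SC.inter, SC.union, mem_inter, mem_union]
      tauto)
    have h2 : Collapses ((K.union L).inter L) S := by
      refine collapses_inter L K S hS' hcol ?_
      intro σ hσ
      simp only [SC.union, mem_union] at hσ ⊢
      tauto
    have e2 : (K.union L).inter L = L := SC.ext' (by
      ext σ
      simp only [SC.inter, SC.union, mem_inter, mem_union]
      tauto)
    rw [e1] at h1; rw [e2] at h2
    exact ⟨⟨h1, hmin⟩, ⟨h2, hmin⟩⟩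
  · rintro ⟨⟨hK, -⟩, ⟨hL, -⟩⟩
    have h1 : Collapses (K.union L) (S.union L) :=
      collapses_union K L S hS hK subset_rfl
    have hS'' : S.faces = L.faces ∩ S.faces := (inter_eq_right.mpr hSL).symm
    have h2 : Collapses (L.union S) (S.union S) :=
      collapses_union L S S hS'' hL subset_rfl
    have e1 : S.union L = L.union S := SC.ext' (by
      simp only [SC.union]; exact union_comm _ _)
    have e2 : S.union S = S := SC.ext' (by
      simp only [SC.union]; exact union_self _)
    rw [← e1, e2] at h2
    exact ⟨h1.trans h2, hmin⟩
end

section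
/- Let K and L be finite nonempty simplicial complexes on disjoint vertex sets. The join K * L is strongly collapsible if and only if K is strongly collapsible or L is strongly collapsible. -/
open Finset

variable {V : Type*} [DecidableEq V] {W : Type*} [DecidableEq W]

/-!
Strong collapsibility is invariant under strong collapses: two elementary collapses of a
complex can be performed in either order, except when the two deleted vertices dominate each
other, and then the two deletions are isomorphic. Hence a minimal complex is strongly collapsible only if
it is a point. Collapses of `K` and `L` lift to collapses of `K * L`, so `K * L` collapses to
`M * N` for minimal complexes `M`, `N` to which `K`, `L` collapse. If neither `M` nor `N` is a
point, `M * N` is again minimal (a vertex of `M` dominated by a vertex of `N` would make the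
latter an apex of the minimal complex `N`), and it is not a point. Conversely, if `K` collapses
to a point `p`, then `K * L` collapses to the cone `p * L`, which collapses to its apex.
-/

namespace SC

section Basic

variable {K : SC V} {u v w p : V}

@[ext]
lemma ext {K L : SC V} (h : K.faces = L.faces) : K = L := by
  cases K; cases L; simpa using h

lemma exists_isMaximal_superset {σ : Finset V} (hσ : σ ∈ K.faces) :
    ∃ τ, K.IsMaximal τ ∧ σ ⊆ τ := by
  obtain ⟨τ, hστ, hτ⟩ := K.faces.exists_le_maximal hσ
  exact ⟨τ, ⟨hτ.prop, fun ρ hρ hτρ => hτ.eq_of_le hρ hτρ⟩, hστ⟩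

lemma isVertex_of_mem {σ : Finset V} (hσ : σ ∈ K.faces) (hv : v ∈ σ) : K.IsVertex v :=
  K.down_closed σ hσ {v} (Finset.singleton_subset_iff.2 hv) (Finset.singleton_nonempty v)

lemma exists_isVertex (hK : K.faces.Nonempty) : ∃ v, K.IsVertex v := by
  obtain ⟨σ, hσ⟩ := hK
  obtain ⟨v, hv⟩ := K.nonempty_of_mem σ hσ
  exact ⟨v, isVertex_of_mem hσ hv⟩

lemma eq_of_isVertex (hK : K.faces = {{p}}) (hv : K.IsVertex v) : v = p := by
  simpa [IsVertex, hK] using hv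

lemma faces_eq_singleton (hp : K.IsVertex p) (h : ∀ u, K.IsVertex u → u = p) :
    K.faces = {{p}} := by
  refine Finset.eq_singleton_iff_unique_mem.2 ⟨hp, fun σ hσ => ?_⟩
  obtain ⟨x, hx⟩ := K.nonempty_of_mem σ hσ
  exact Finset.eq_singleton_iff_unique_mem.2
    ⟨h x (isVertex_of_mem hσ hx) ▸ hx, fun y hy => h y (isVertex_of_mem hσ hy)⟩

lemma eq_empty_or_mem_of_subset {s t : Finset V} (hs : s = ∅ ∨ s ∈ K.faces)
    (hts : t ⊆ s) : t = ∅ ∨ t ∈ K.faces := by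
  rcases t.eq_empty_or_nonempty with ht | ht
  · exact .inl ht
  · rcases hs with rfl | hs
    · exact .inl (Finset.subset_empty.1 hts)
    · exact .inr (K.down_closed s hs t hts ht)

lemma forall_isMaximal_mem_iff :
    (∀ σ, K.IsMaximal σ → v ∈ σ → w ∈ σ) ↔ ∀ σ ∈ K.faces, v ∈ σ → insert w σ ∈ K.faces := by
  constructor
  · intro h σ hσ hv
    obtain ⟨τ, hτ, hστ⟩ := exists_isMaximal_superset hσ
    exact K.down_closed τ hτ.1 _ (Finset.insert_subset (h τ hτ (hστ hv)) hστ)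
      (Finset.insert_nonempty w σ)
  · intro h σ hσ hv
    rw [hσ.2 _ (h σ hσ.1 hv) (Finset.subset_insert w σ)]
    exact Finset.mem_insert_self w σ

lemma dominated_iff : K.Dominated v w ↔
    v ≠ w ∧ K.IsVertex v ∧ K.IsVertex w ∧ ∀ σ ∈ K.faces, v ∈ σ → insert w σ ∈ K.faces := by
  rw [Dominated, forall_isMaximal_mem_iff]

lemma Dominated.trans (huv : K.Dominated u v) (hvw : K.Dominated v w) (huw : u ≠ w) :
    K.Dominated u w :=
  ⟨huw, huv.2.1, hvw.2.2.1, fun σ hσ hu => hvw.2.2.2 σ hσ (huv.2.2.2 σ hσ hu)⟩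

lemma not_dominated_of_faces_eq_singleton (hK : K.faces = {{p}}) : ¬ K.Dominated v w :=
  fun h => h.1 ((eq_of_isVertex hK h.2.1).trans (eq_of_isVertex hK h.2.2.1).symm)

end Basic

section Delete

variable {K : SC V} {u v w : V}

lemma mem_delete {σ : Finset V} : σ ∈ (K.delete u).faces ↔ σ ∈ K.faces ∧ u ∉ σ :=
  Finset.mem_filter

lemma isVertex_delete : (K.delete u).IsVertex v ↔ K.IsVertex v ∧ v ≠ u := by
  simp [IsVertex, mem_delete, eq_comm]

lemma delete_comm (K : SC V) (u v : V) : (K.delete u).delete v = (K.delete v).delete u := by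
  ext σ
  simp only [mem_delete]
  tauto

lemma card_delete_lt (hu : K.IsVertex u) : (K.delete u).faces.card < K.faces.card :=
  Finset.card_lt_card
    ⟨Finset.filter_subset _ _, fun h => (mem_delete.1 (h hu)).2 (Finset.mem_singleton_self u)⟩

lemma Dominated.delete (h : K.Dominated v w) (hvu : v ≠ u) (hwu : w ≠ u) :
    (K.delete u).Dominated v w := by
  obtain ⟨hvw, hv, hw, h⟩ := dominated_iff.1 h
  refine dominated_iff.2 ⟨hvw, isVertex_delete.2 ⟨hv, hvu⟩, isVertex_delete.2 ⟨hw, hwu⟩,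
    fun σ hσ hvσ => mem_delete.2 ⟨h σ (mem_delete.1 hσ).1 hvσ, ?_⟩⟩
  simpa [hwu.symm] using (mem_delete.1 hσ).2

/-- Deleting `u` keeps `v` dominated, except when `u` and `v` dominate each other. -/
lemma Dominated.exists_dominated_delete {u' : V} (hv : K.Dominated v w) (hu : K.Dominated u u')
    (hvu : v ≠ u) (h : w ≠ u ∨ u' ≠ v) : ∃ x, (K.delete u).Dominated v x := by
  rcases ne_or_eq w u with hwu | rfl
  · exact ⟨w, hv.delete hvu hwu⟩
  · have hu'v : u' ≠ v := h.resolve_left (not_not.2 rfl)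
    exact ⟨u', (hv.trans hu hu'v.symm).delete hvu hu.1.symm⟩

end Delete

section Map

variable {V' : Type*} [DecidableEq V'] {K : SC V} {u v w : V}

def map (e : V ≃ V') (K : SC V) : SC V' where
  faces := K.faces.map e.finsetCongr.toEmbedding
  nonempty_of_mem σ hσ := by
    obtain ⟨τ, hτ, rfl⟩ := Finset.mem_map.1 hσ
    simpa using K.nonempty_of_mem τ hτ
  down_closed σ hσ τ hτσ hτ := by
    rw [Finset.mem_map_equiv] at hσ ⊢
    simp only [Equiv.finsetCongr_symm, Equiv.finsetCongr_apply] at hσ ⊢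
    exact K.down_closed _ hσ _ (Finset.map_subset_map.2 hτσ) (Finset.map_nonempty.2 hτ)

lemma mem_map {e : V ≃ V'} {σ : Finset V'} :
    σ ∈ (K.map e).faces ↔ σ.map e.symm.toEmbedding ∈ K.faces := by
  simp [map, Finset.mem_map_equiv]

lemma map_delete (e : V ≃ V') (K : SC V) (v : V) :
    (K.delete v).map e = (K.map e).delete (e v) := by
  ext σ
  simp [mem_map, mem_delete, Finset.mem_map_equiv]

lemma Dominated.map (e : V ≃ V') (h : K.Dominated v w) : (K.map e).Dominated (e v) (e w) := by
  obtain ⟨hvw, hv, hw, h⟩ := dominated_iff.1 h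
  refine dominated_iff.2 ⟨e.injective.ne hvw, by simpa [IsVertex, mem_map] using hv,
    by simpa [IsVertex, mem_map] using hw, fun σ hσ hvσ => ?_⟩
  rw [mem_map] at hσ ⊢
  simpa [Finset.map_insert] using h _ hσ (by simpa [Finset.mem_map_equiv] using hvσ)

lemma map_swap_eq_self (huv : K.Dominated u v) (hvu : K.Dominated v u) :
    K.map (Equiv.swap u v) = K := by
  ext1
  refine Finset.map_eq_of_subset fun σ' hσ' => ?_
  obtain ⟨σ, hσ, rfl⟩ := Finset.mem_map.1 hσ'
  obtain ⟨τ, hτ, hστ⟩ := exists_isMaximal_superset hσ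
  have hswap : ∀ x ∈ τ, Equiv.swap u v x ∈ τ := by
    intro x hx
    rw [Equiv.swap_apply_def]
    split_ifs with hxu hxv
    · exact huv.2.2.2 τ hτ (hxu ▸ hx)
    · exact hvu.2.2.2 τ hτ (hxv ▸ hx)
    · exact hx
  refine K.down_closed τ hτ.1 _ ?_ (by simpa using K.nonempty_of_mem σ hσ)
  intro x hx
  obtain ⟨y, hy, rfl⟩ := Finset.mem_map.1 hx
  exact hswap y (hστ hy)

end Map

end SC

open SC

section Collapse

variable {V' : Type*} [DecidableEq V'] {K K' : SC V}

lemma Collapses.map (e : V ≃ V') (h : Collapses K K') : Collapses (K.map e) (K'.map e) := by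
  refine Relation.ReflTransGen.lift (SC.map e) (fun M _ ⟨v, w, hvw, hM⟩ => ?_) _ _ h
  exact ⟨e v, e w, hvw.map e, hM ▸ map_delete e M v⟩

lemma Collapses.faces_nonempty (h : Collapses K K') (hK : K.faces.Nonempty) :
    K'.faces.Nonempty := by
  induction h with
  | refl => exact hK
  | tail _ hstep _ =>
    obtain ⟨v, w, hvw, rfl⟩ := hstep
    exact ⟨{w}, mem_delete.2 ⟨hvw.2.2.1, Finset.notMem_singleton.2 hvw.1⟩⟩

lemma StronglyCollapsible.map (e : V ≃ V') (h : StronglyCollapsible K) :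
    StronglyCollapsible (K.map e) := by
  obtain ⟨P, p, hKP, hP⟩ := h
  exact ⟨P.map e, e p, hKP.map e, by simp [SC.map, hP]⟩

lemma StronglyCollapsible.of_collapses (h : Collapses K K') (h' : StronglyCollapsible K') :
    StronglyCollapsible K := by
  obtain ⟨P, p, hK'P, hP⟩ := h'
  exact ⟨P, p, h.trans hK'P, hP⟩

/-- Induction along a collapse of `K` to a point whose first step deletes `u`: if `u` and `v`
dominate each other, `K.delete u` and `K.delete v` are isomorphic via their transposition;
otherwise `K.delete v` collapses to `(K.delete u).delete v`. -/
lemma StronglyCollapsible.delete {v w : V} (h : StronglyCollapsible K) (hvw : K.Dominated v w) :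
    StronglyCollapsible (K.delete v) := by
  obtain ⟨P, p, hKP, hP⟩ := h
  induction hKP using Relation.ReflTransGen.head_induction_on generalizing v w with
  | refl => exact absurd hvw (not_dominated_of_faces_eq_singleton hP)
  | @head M M' hstep hM'P ih =>
    obtain ⟨u, u', huu', rfl⟩ := hstep
    rcases eq_or_ne v u with rfl | hvu
    · exact ⟨P, p, hM'P, hP⟩
    by_cases hmutual : w = u ∧ u' = v
    · obtain ⟨hwu, hu'v⟩ := hmutual
      rw [hwu] at hvw
      rw [hu'v] at huu'
      have hiso : (M.delete u).map (Equiv.swap u v) = M.delete v := by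
        rw [map_delete, map_swap_eq_self huu' hvw, Equiv.swap_apply_left]
      exact hiso ▸ StronglyCollapsible.map _ ⟨P, p, hM'P, hP⟩
    · obtain ⟨x, hvx⟩ := hvw.exists_dominated_delete huu' hvu (not_and_or.1 hmutual)
      obtain ⟨y, huy⟩ := huu'.exists_dominated_delete hvw hvu.symm
        (not_and_or.1 hmutual).symm
      refine .of_collapses (.single ⟨u, y, huy, rfl⟩) ?_
      rw [delete_comm]
      exact ih hvx

lemma Collapses.stronglyCollapsible_iff (h : Collapses K K') :
    StronglyCollapsible K ↔ StronglyCollapsible K' := by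
  refine ⟨fun hK => ?_, .of_collapses h⟩
  induction h with
  | refl => exact hK
  | tail _ hstep ih =>
    obtain ⟨v, w, hvw, rfl⟩ := hstep
    exact ih.delete hvw

end Collapse

namespace SC

def IsApex (K : SC V) (p : V) : Prop :=
  K.IsVertex p ∧ ∀ σ ∈ K.faces, insert p σ ∈ K.faces

section Apex

variable {K : SC V} {p : V}

lemma isApex_of_faces_eq_singleton (hK : K.faces = {{p}}) : K.IsApex p :=
  ⟨by simp [IsVertex, hK], fun σ hσ => by simp_all⟩

lemma IsApex.dominated {u : V} (h : K.IsApex p) (hu : K.IsVertex u) (hup : u ≠ p) :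
    K.Dominated u p :=
  dominated_iff.2 ⟨hup, hu, h.1, fun σ hσ _ => h.2 σ hσ⟩

lemma IsApex.delete {u : V} (h : K.IsApex p) (hup : u ≠ p) : (K.delete u).IsApex p := by
  refine ⟨isVertex_delete.2 ⟨h.1, hup.symm⟩, fun σ hσ => ?_⟩
  rw [mem_delete] at hσ ⊢
  exact ⟨h.2 σ hσ.1, by simpa [hup] using hσ.2⟩

lemma IsApex.stronglyCollapsible (h : K.IsApex p) : StronglyCollapsible K := by
  induction hn : K.faces.card using Nat.strong_induction_on generalizing K with
  | _ n ih =>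
    by_cases hK : ∃ u, K.IsVertex u ∧ u ≠ p
    · obtain ⟨u, hu, hup⟩ := hK
      exact .of_collapses (.single ⟨u, p, h.dominated hu hup, rfl⟩)
        (ih _ (hn ▸ card_delete_lt hu) (h.delete hup) rfl)
    · push Not at hK
      exact ⟨K, p, .refl, faces_eq_singleton h.1 hK⟩

lemma Minimal.faces_eq_singleton_of_isApex (hK : K.Minimal) (h : K.IsApex p) :
    K.faces = {{p}} :=
  faces_eq_singleton h.1 fun u hu => by_contra fun hup => hK u p (h.dominated hu hup)

lemma Minimal.exists_faces_eq_singleton (hK : K.Minimal) (h : StronglyCollapsible K) :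
    ∃ p, K.faces = {{p}} := by
  obtain ⟨P, p, hKP, hP⟩ := h
  rcases Relation.ReflTransGen.cases_head hKP with rfl | ⟨_, ⟨v, w, hvw, _⟩, _⟩
  · exact ⟨p, hP⟩
  · exact absurd hvw (hK v w)

lemma exists_collapses_minimal (K : SC V) : ∃ M, Collapses K M ∧ M.Minimal := by
  induction hn : K.faces.card using Nat.strong_induction_on generalizing K with
  | _ n ih =>
    by_cases hK : K.Minimal
    · exact ⟨K, .refl, hK⟩
    · simp only [Minimal, not_forall, not_not] at hK
      obtain ⟨v, w, hvw⟩ := hK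
      obtain ⟨M, hM, hMmin⟩ := ih _ (hn ▸ card_delete_lt hvw.2.1) (K.delete v) rfl
      exact ⟨M, .head ⟨v, w, hvw, rfl⟩ hM, hMmin⟩

end Apex

def join (K : SC V) (L : SC W) : SC (V ⊕ W) where
  faces := (((insert ∅ K.faces) ×ˢ (insert ∅ L.faces)).image fun st => st.1.disjSum st.2).erase ∅
  nonempty_of_mem σ hσ := Finset.nonempty_iff_ne_empty.2 (Finset.ne_of_mem_erase hσ)
  down_closed σ hσ τ hτσ hτ := by
    simp only [Finset.mem_erase, Finset.mem_image, Finset.mem_product, Prod.exists,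
      Finset.disjSum_eq_iff, Finset.mem_insert] at hσ ⊢
    obtain ⟨-, _, _, ⟨hl, hr⟩, rfl, rfl⟩ := hσ
    exact ⟨hτ.ne_empty, _, _, ⟨eq_empty_or_mem_of_subset hl (Finset.toLeft_subset_toLeft hτσ),
      eq_empty_or_mem_of_subset hr (Finset.toRight_subset_toRight hτσ)⟩, rfl, rfl⟩

section Join

variable {K : SC V} {L : SC W}

lemma mem_join {σ : Finset (V ⊕ W)} : σ ∈ (K.join L).faces ↔
    σ.Nonempty ∧ (σ.toLeft = ∅ ∨ σ.toLeft ∈ K.faces) ∧ (σ.toRight = ∅ ∨ σ.toRight ∈ L.faces) := by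
  simp [join, Finset.disjSum_eq_iff, Finset.nonempty_iff_ne_empty, and_comm]

lemma mem_join_iff_exists {σ : Finset (V ⊕ W)} : σ ∈ (K.join L).faces ↔
    ((∃ τ ∈ K.faces, σ = τ.image Sum.inl) ∨ (∃ ρ ∈ L.faces, σ = ρ.image Sum.inr) ∨
      ∃ τ ∈ K.faces, ∃ ρ ∈ L.faces, σ = τ.image Sum.inl ∪ ρ.image Sum.inr) := by
  have hinl (τ : Finset V) : τ.image Sum.inl = τ.disjSum (∅ : Finset W) := by ext (x | x) <;> simp
  have hinr (ρ : Finset W) : ρ.image Sum.inr = (∅ : Finset V).disjSum ρ := by ext (x | x) <;> simp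
  have hunion (τ : Finset V) (ρ : Finset W) : τ.image Sum.inl ∪ ρ.image Sum.inr = τ.disjSum ρ := by
    ext (x | x) <;> simp
  have hK : σ.toLeft ∈ K.faces → σ.toLeft ≠ ∅ := fun h => (K.nonempty_of_mem _ h).ne_empty
  have hL : σ.toRight ∈ L.faces → σ.toRight ≠ ∅ := fun h => (L.nonempty_of_mem _ h).ne_empty
  have hσ : σ.Nonempty ↔ ¬ (σ.toLeft = ∅ ∧ σ.toRight = ∅) := by
    rw [Finset.nonempty_iff_ne_empty, ← Finset.toLeft_disjSum_toRight (u := σ)]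
    simp
  simp only [hunion]
  simp only [hinl, hinr, Finset.eq_disjSum_iff, mem_join, hσ, ← and_assoc, exists_and_right,
    exists_eq_right']
  tauto

lemma isVertex_join_inl {v : V} : (K.join L).IsVertex (.inl v) ↔ K.IsVertex v := by
  have hl : ({.inl v} : Finset (V ⊕ W)).toLeft = {v} := by ext; simp
  have hr : ({.inl v} : Finset (V ⊕ W)).toRight = ∅ := by ext; simp
  simp [IsVertex, mem_join, hl, hr]

lemma isVertex_join_inr {w : W} : (K.join L).IsVertex (.inr w) ↔ L.IsVertex w := by
  have hl : ({.inr w} : Finset (V ⊕ W)).toLeft = ∅ := by ext; simp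
  have hr : ({.inr w} : Finset (V ⊕ W)).toRight = {w} := by ext; simp
  simp [IsVertex, mem_join, hl, hr]

lemma map_sumComm_join : (K.join L).map (Equiv.sumComm V W) = L.join K := by
  ext σ
  simp [mem_map, mem_join]
  tauto

lemma join_delete_inl (v : V) : (K.join L).delete (.inl v) = (K.delete v).join L := by
  ext σ
  simp only [mem_delete, mem_join, ← Finset.mem_toLeft]
  have : σ.toLeft = ∅ → v ∉ σ.toLeft := fun h => h ▸ Finset.notMem_empty v
  tauto

lemma dominated_inl_inl_iff {v w : V} :
    (K.join L).Dominated (.inl v) (.inl w) ↔ K.Dominated v w := by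
  rw [dominated_iff, dominated_iff, isVertex_join_inl, isVertex_join_inl, Ne, Sum.inl.injEq]
  refine and_congr_right fun _ => and_congr_right fun _ => and_congr_right fun _ =>
    ⟨fun h σ hσ hv => ?_, fun h σ hσ hv => ?_⟩
  · have hσ' : σ.disjSum ∅ ∈ (K.join L).faces := mem_join.2 ⟨⟨.inl v, by simpa⟩,
      by rw [Finset.toLeft_disjSum]; exact .inr hσ, by rw [Finset.toRight_disjSum]; exact .inl rfl⟩
    have := h _ hσ' (by simpa)
    rw [mem_join, Finset.toLeft_insert_inl, Finset.toLeft_disjSum] at this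
    exact this.2.1.resolve_left (Finset.insert_ne_empty w σ)
  · obtain ⟨-, hl, hr⟩ := mem_join.1 hσ
    have hvl : v ∈ σ.toLeft := Finset.mem_toLeft.2 hv
    refine mem_join.2 ⟨Finset.insert_nonempty _ _, ?_, by simpa using hr⟩
    rw [Finset.toLeft_insert_inl]
    exact .inr (h _ (hl.resolve_left (Finset.ne_empty_of_mem hvl)) hvl)

lemma isApex_of_dominated_inl_inr {v : V} {w : W} (h : (K.join L).Dominated (.inl v) (.inr w)) :
    L.IsApex w := by
  obtain ⟨-, hv, hw, h⟩ := dominated_iff.1 h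
  refine ⟨isVertex_join_inr.1 hw, fun ρ hρ => ?_⟩
  have hvρ : ({v} : Finset V).disjSum ρ ∈ (K.join L).faces :=
    mem_join.2 ⟨⟨.inl v, by simp⟩, by simpa [IsVertex] using isVertex_join_inl.1 hv, by simp [hρ]⟩
  have := h _ hvρ (by simp)
  rw [mem_join, Finset.toRight_insert_inr, Finset.toRight_disjSum] at this
  exact this.2.2.resolve_left (Finset.insert_ne_empty w ρ)

lemma IsApex.join_inl {p : V} (h : K.IsApex p) : (K.join L).IsApex (.inl p) := by
  refine ⟨isVertex_join_inl.2 h.1, fun σ hσ => ?_⟩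
  obtain ⟨-, hl, hr⟩ := mem_join.1 hσ
  refine mem_join.2 ⟨Finset.insert_nonempty _ _, .inr ?_, by simpa using hr⟩
  rw [Finset.toLeft_insert_inl]
  rcases hl with hl | hl
  · simpa [hl, IsVertex] using h.1
  · exact h.2 _ hl

lemma not_dominated_inl (hK : K.Minimal) (hL : L.Minimal) (hLpt : ∀ q, L.faces ≠ {{q}}) (v : V)
    (b : V ⊕ W) : ¬ (K.join L).Dominated (.inl v) b := by
  intro h
  cases b with
  | inl w => exact hK v w (dominated_inl_inl_iff.1 h)
  | inr w => exact hLpt w (hL.faces_eq_singleton_of_isApex (isApex_of_dominated_inl_inr h))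

lemma Minimal.join (hK : K.Minimal) (hL : L.Minimal) (hKpt : ∀ p, K.faces ≠ {{p}})
    (hLpt : ∀ q, L.faces ≠ {{q}}) : (K.join L).Minimal := by
  rintro (v | w) b h
  · exact not_dominated_inl hK hL hLpt v b h
  · have h' := h.map (Equiv.sumComm V W)
    rw [map_sumComm_join] at h'
    exact not_dominated_inl hL hK hKpt w _ h'

end Join

end SC

section JoinCollapse

variable {K K' : SC V} {L L' : SC W}

lemma Collapses.join_left (L : SC W) (h : Collapses K K') : Collapses (K.join L) (K'.join L) := by
  refine Relation.ReflTransGen.lift (fun M => M.join L) (fun M _ ⟨v, w, hvw, hM⟩ => ?_) _ _ h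
  exact ⟨.inl v, .inl w, dominated_inl_inl_iff.2 hvw, hM ▸ (join_delete_inl v).symm⟩

lemma Collapses.join_right (K : SC V) (h : Collapses L L') : Collapses (K.join L) (K.join L') := by
  simpa only [map_sumComm_join] using (h.join_left K).map (Equiv.sumComm W V)

lemma StronglyCollapsible.join_left (L : SC W) (h : StronglyCollapsible K) :
    StronglyCollapsible (K.join L) := by
  obtain ⟨P, p, hKP, hP⟩ := h
  exact .of_collapses (hKP.join_left L)
    (isApex_of_faces_eq_singleton hP).join_inl.stronglyCollapsible

lemma StronglyCollapsible.join_right (K : SC V) (h : StronglyCollapsible L) :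
    StronglyCollapsible (K.join L) := by
  simpa only [map_sumComm_join] using (h.join_left K).map (Equiv.sumComm W V)

end JoinCollapse

theorem stmt10 (K : SC V) (L : SC W) (hK : K.faces.Nonempty) (hL : L.faces.Nonempty)
    (J : SC (V ⊕ W))
    (hJ : ∀ σ : Finset (V ⊕ W), σ ∈ J.faces ↔
      ((∃ τ ∈ K.faces, σ = τ.image Sum.inl) ∨ (∃ ρ ∈ L.faces, σ = ρ.image Sum.inr) ∨
        ∃ τ ∈ K.faces, ∃ ρ ∈ L.faces, σ = τ.image Sum.inl ∪ ρ.image Sum.inr)) :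
    StronglyCollapsible J ↔ (StronglyCollapsible K ∨ StronglyCollapsible L) := by
  obtain rfl : J = K.join L := SC.ext (Finset.ext fun σ => (hJ σ).trans mem_join_iff_exists.symm)
  refine ⟨fun hKL => ?_, fun h => h.elim (.join_left L) (.join_right K)⟩
  by_contra! hneither
  obtain ⟨M, hKM, hM⟩ := K.exists_collapses_minimal
  obtain ⟨N, hLN, hN⟩ := L.exists_collapses_minimal
  have hMpt : ∀ p, M.faces ≠ {{p}} := fun p hp => hneither.1 ⟨M, p, hKM, hp⟩
  have hNpt : ∀ q, N.faces ≠ {{q}} := fun q hq => hneither.2 ⟨N, q, hLN, hq⟩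
  have hcollapse : Collapses (K.join L) (M.join N) := (hKM.join_left L).trans (hLN.join_right M)
  have hMN : StronglyCollapsible (M.join N) := hcollapse.stronglyCollapsible_iff.1 hKL
  obtain ⟨p, hp⟩ := (hM.join hN hMpt hNpt).exists_faces_eq_singleton hMN
  obtain ⟨m, hm⟩ := exists_isVertex (hKM.faces_nonempty hK)
  obtain ⟨q, hq⟩ := exists_isVertex (hLN.faces_nonempty hL)
  exact Sum.inl_ne_inr ((eq_of_isVertex hp (isVertex_join_inl.2 hm)).trans
    (eq_of_isVertex hp (isVertex_join_inr.2 hq)).symm)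
end
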